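/- arXiv:gr-qc/0301101 — 3 statements merged into one kernel-verified Lean document; each statement's English description precedes it below -/
import Mathlib

section
/- Let S be a closed subset of a finite-dimensional real normed vector space V such that 0 ∈ S is not an isolated point of S and n·v ∈ S for every v ∈ S and n ∈ ℤ. Then S contains a line ℝ·y for some y ≠ 0. -/
open Filter Topology


/-- If `S` is a closed subset of a finite-dimensional real normed space with
`0 ∈ S` not isolated in `S`, and `S` is stable under integer scalar
multiplication, then `S` contains a line `ℝ·y` for some `y ≠ 0`. -/
theorem stmt_7 {V : Type*} [NormedAddCommGroup V] [NormedSpace ℝ V]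
    [FiniteDimensional ℝ V] (S : Set V) (hS : IsClosed S) (h0 : (0:V) ∈ S)
    (hacc : ∀ ε > 0, ∃ v ∈ S, v ≠ 0 ∧ ‖v‖ < ε)
    (hmul : ∀ v ∈ S, ∀ n : ℤ, (n : ℝ) • v ∈ S) :
    ∃ y : V, y ≠ 0 ∧ ∀ s : ℝ, s • y ∈ S := by
  have hx : ∀ n : ℕ, ∃ v ∈ S, v ≠ 0 ∧ ‖v‖ < 1/(n+1) := fun n =>
    hacc (1/(n+1)) (by positivity)
  choose x hxS hx0 hxn using hx
  have hnormpos : ∀ n, 0 < ‖x n‖ := fun n => norm_pos_iff.2 (hx0 n)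
  set k : ℕ → ℕ := fun n => ⌈1/‖x n‖⌉₊ with hkdef
  have hk_ge : ∀ n, 1/‖x n‖ ≤ (k n : ℝ) := fun n => Nat.le_ceil _
  have hk_lt : ∀ n, (k n : ℝ) < 1/‖x n‖ + 1 := fun n =>
    Nat.ceil_lt_add_one (by positivity)
  have hk_pos : ∀ n, (0:ℝ) < (k n : ℝ) := fun n =>
    lt_of_lt_of_le (div_pos one_pos (hnormpos n)) (hk_ge n)
  set y : ℕ → V := fun n => ((k n : ℝ)) • x n with hydef
  have hyS : ∀ n, y n ∈ S := fun n => by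
    have := hmul (x n) (hxS n) (k n : ℤ)
    simpa [hydef] using this
  have hynorm : ∀ n, ‖y n‖ = (k n : ℝ) * ‖x n‖ := fun n => by
    simp [hydef, norm_smul, abs_of_nonneg (le_of_lt (hk_pos n))]
  have hy_lb : ∀ n, 1 ≤ ‖y n‖ := fun n => by
    rw [hynorm]
    calc (1:ℝ) = (1/‖x n‖) * ‖x n‖ := (one_div_mul_cancel (hnormpos n).ne').symm
    _ ≤ (k n : ℝ) * ‖x n‖ := by
        gcongr
        exact hk_ge n
  have hxle1 : ∀ n, ‖x n‖ ≤ 1 := fun n => by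
    have := hxn n
    have h1 : 1/((n:ℝ)+1) ≤ 1 := by
      rw [div_le_one (by positivity)]
      linarith [Nat.cast_nonneg (α := ℝ) n]
    linarith
  have hy_ub : ∀ n, ‖y n‖ ≤ 2 := fun n => by
    rw [hynorm]
    calc (k n : ℝ) * ‖x n‖ ≤ (1/‖x n‖ + 1) * ‖x n‖ :=
          mul_le_mul_of_nonneg_right (hk_lt n).le (hnormpos n).le
    _ = 1 + ‖x n‖ := by
          rw [add_mul, one_mul, one_div_mul_cancel (hnormpos n).ne']
    _ ≤ 2 := by linarith [hxle1 n]
  have hk_big : ∀ n : ℕ, (n:ℝ) + 1 ≤ (k n : ℝ) := fun n => by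
    refine le_trans ?_ (hk_ge n)
    rw [le_div_iff₀ (hnormpos n)]
    have h2 : ‖x n‖ * ((n:ℝ)+1) < 1 := (lt_div_iff₀ (by positivity)).1 (hxn n)
    nlinarith
  have hk_tendsto : Filter.Tendsto (fun n => (k n : ℝ)) Filter.atTop Filter.atTop := by
    apply Filter.tendsto_atTop_mono hk_big
    exact Filter.tendsto_atTop_add_const_right _ 1 tendsto_natCast_atTop_atTop
  -- compactness
  have hmem : ∀ n, y n ∈ Metric.closedBall (0:V) 2 := fun n => by
    simpa [Metric.mem_closedBall, dist_zero_right] using hy_ub n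
  obtain ⟨L, hL, φ, hφ, hconv⟩ :=
    (isCompact_closedBall (0:V) 2).tendsto_subseq hmem
  have hL1 : 1 ≤ ‖L‖ := by
    have hn : Filter.Tendsto (fun n => ‖y (φ n)‖) Filter.atTop (𝓝 ‖L‖) :=
      (continuous_norm.tendsto L).comp hconv
    exact ge_of_tendsto hn (Filter.Eventually.of_forall fun n => hy_lb (φ n))
  refine ⟨L, fun h => by rw [h, norm_zero] at hL1; linarith, fun t => ?_⟩
  -- approximate t by r n / k (φ n)
  set r : ℕ → ℤ := fun n => ⌊t * (k (φ n) : ℝ)⌋ with hrdef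
  have hmemS : ∀ n, ((r n : ℝ) / (k (φ n) : ℝ)) • y (φ n) ∈ S := fun n => by
    have h1 : ((r n : ℝ) / (k (φ n) : ℝ)) • y (φ n) = (r n : ℝ) • x (φ n) := by
      rw [hydef]
      rw [smul_smul, div_mul_cancel₀]
      exact ne_of_gt (hk_pos (φ n))
    rw [h1]
    exact hmul _ (hxS (φ n)) (r n)
  have hkφ : Filter.Tendsto (fun n => (k (φ n) : ℝ)) Filter.atTop Filter.atTop :=
    hk_tendsto.comp hφ.tendsto_atTop
  have hscal : Filter.Tendsto (fun n => (r n : ℝ) / (k (φ n) : ℝ)) Filter.atTop (𝓝 t) := by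
    have hub : ∀ n, (r n : ℝ) / (k (φ n) : ℝ) ≤ t := fun n => by
      rw [div_le_iff₀ (hk_pos (φ n))]
      exact Int.floor_le _
    have hlb : ∀ n, t - 1 / (k (φ n) : ℝ) ≤ (r n : ℝ) / (k (φ n) : ℝ) := fun n => by
      have h := Int.sub_one_lt_floor (t * (k (φ n) : ℝ))
      rw [le_div_iff₀ (hk_pos (φ n)), sub_mul, one_div,
        inv_mul_cancel₀ (hk_pos (φ n)).ne']
      exact h.le
    have h1 : Filter.Tendsto (fun n => t - 1 / (k (φ n) : ℝ)) Filter.atTop (𝓝 t) := by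
      have : Filter.Tendsto (fun n => 1 / (k (φ n) : ℝ)) Filter.atTop (𝓝 0) :=
        hkφ.inv_tendsto_atTop.congr (fun n => (one_div _).symm)
      simpa using tendsto_const_nhds.sub this
    exact tendsto_of_tendsto_of_tendsto_of_le_of_le h1 tendsto_const_nhds hlb hub
  have hfin : Filter.Tendsto (fun n => ((r n : ℝ) / (k (φ n) : ℝ)) • y (φ n))
      Filter.atTop (𝓝 (t • L)) := hscal.smul hconv
  exact hS.mem_of_tendsto hfin (Filter.Eventually.of_forall hmemS)
end

section
/- Suppose h : [T,∞) → (0,∞) is continuous and for fixed constants 0 < α₁ < 1 < α₂ with α₁α₂ = 1 satisfies, for all τ_a, τ ≥ T with τ ≥ τ_a: α₁ exp(−4α₂ ∫_{τ_a}^{τ} h) ≤ h(τ)/h(τ_a) ≤ α₂ exp(−4α₁ ∫_{τ_a}^{τ} h). Then for all τ ≥ τ_a, α₁ h(τ_a)/[1 + 4h(τ_a)(τ−τ_a)]^{α₂/α₁} ≤ h(τ) ≤ α₂ h(τ_a)/[1 + 4h(τ_a)(τ−τ_a)]^{α₁/α₂}. -/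
/-!
With `g(t) = 4 ∫_{τ_a}^t h`, so that `g' = 4h`, the hypothesis says that
`α₁ e^{-α₂ g} ≤ g'(t)/g'(τ_a) ≤ α₂ e^{-α₁ g}`. Since `α₁α₂ = 1`, this bounds the derivatives of
`e^{α₁ g}` from above and of `e^{α₂ g}` from below by the constant `g'(τ_a)`, so that
`e^{α₁ g(τ)} ≤ 1 + g'(τ_a)(τ - τ_a) ≤ e^{α₂ g(τ)}`. Feeding these back into the hypothesis at `τ`
turns the exponentials into powers of `1 + g'(τ_a)(τ - τ_a)`.
-/

open Set Real intervalIntegral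

theorem integral_hasDerivAt_right_of_continuousOn {h : ℝ → ℝ} {a b x : ℝ}
    (hc : ContinuousOn h (Icc a b)) (hx : x ∈ Ioo a b) :
    HasDerivAt (fun t => ∫ s in a..t, h s) (h x) x := by
  refine integral_hasDerivAt_right ?_ ?_ (hc.continuousAt (Icc_mem_nhds hx.1 hx.2))
  · exact (hc.mono (Icc_subset_Icc_right hx.2.le)).intervalIntegrable_of_Icc hx.1.le
  · exact (hc.mono Ioo_subset_Icc_self).stronglyMeasurableAtFilter isOpen_Ioo x hx

section MeanValue

variable {f f' : ℝ → ℝ} {a b C : ℝ}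

theorem sub_le_mul_sub_of_hasDerivAt_le (hab : a ≤ b) (hf : ContinuousOn f (Icc a b))
    (hf' : ∀ x ∈ Ioo a b, HasDerivAt f (f' x) x) (hle : ∀ x ∈ Ioo a b, f' x ≤ C) :
    f b - f a ≤ C * (b - a) := by
  have hmono : MonotoneOn (fun t => C * t - f t) (Icc a b) := by
    refine monotoneOn_of_hasDerivWithinAt_nonneg (f' := fun x => C - f' x) (convex_Icc a b)
      (by fun_prop) (fun x hx => ?_) (fun x hx => ?_) <;> rw [interior_Icc] at hx
    · simpa using (((hasDerivAt_id' x).const_mul C).fun_sub (hf' x hx)).hasDerivWithinAt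
    · linarith [hle x hx]
  linarith [hmono (left_mem_Icc.2 hab) (right_mem_Icc.2 hab) hab]

theorem mul_sub_le_sub_of_le_hasDerivAt (hab : a ≤ b) (hf : ContinuousOn f (Icc a b))
    (hf' : ∀ x ∈ Ioo a b, HasDerivAt f (f' x) x) (hle : ∀ x ∈ Ioo a b, C ≤ f' x) :
    C * (b - a) ≤ f b - f a := by
  have := sub_le_mul_sub_of_hasDerivAt_le (f := fun t => -f t) (f' := fun x => -f' x) (C := -C)
    hab hf.neg (fun x hx => (hf' x hx).neg) (fun x hx => neg_le_neg (hle x hx))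
  linarith

end MeanValue

section Comparison

variable {g g' : ℝ → ℝ} {a b α c : ℝ}

theorem exp_mul_le_one_add_of_mul_exp_le (hab : a ≤ b) (hg : ContinuousOn g (Icc a b))
    (hg' : ∀ x ∈ Ioo a b, HasDerivAt g (g' x) x) (hga : g a = 0)
    (hle : ∀ x ∈ Ioo a b, α * g' x * exp (α * g x) ≤ c) :
    exp (α * g b) ≤ 1 + c * (b - a) := by
  have := sub_le_mul_sub_of_hasDerivAt_le hab (by fun_prop)
    (fun x hx => ((hg' x hx).const_mul α).exp) (fun x hx => (hle x hx).trans_eq' (by ring))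
  rw [hga, mul_zero, exp_zero] at this
  linarith

theorem one_add_le_exp_mul_of_le_mul_exp (hab : a ≤ b) (hg : ContinuousOn g (Icc a b))
    (hg' : ∀ x ∈ Ioo a b, HasDerivAt g (g' x) x) (hga : g a = 0)
    (hle : ∀ x ∈ Ioo a b, c ≤ α * g' x * exp (α * g x)) :
    1 + c * (b - a) ≤ exp (α * g b) := by
  have := mul_sub_le_sub_of_le_hasDerivAt hab (by fun_prop)
    (fun x hx => ((hg' x hx).const_mul α).exp) (fun x hx => (hle x hx).trans_eq (by ring))
  rw [hga, mul_zero, exp_zero] at this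
  linarith

end Comparison

theorem exp_mul_rpow_div {α : ℝ} (hα : α ≠ 0) (β x : ℝ) :
    exp (α * x) ^ (β / α) = exp (β * x) := by
  rw [← exp_mul]
  congr 1
  field_simp

theorem inv_rpow_div_le_exp_neg_mul {α β x P : ℝ} (hα : 0 < α) (hβ : 0 ≤ β)
    (hP : exp (α * x) ≤ P) : (P ^ (β / α))⁻¹ ≤ exp (-β * x) := by
  rw [neg_mul, exp_neg, ← exp_mul_rpow_div hα.ne' β x]
  exact inv_anti₀ (by positivity) (rpow_le_rpow (exp_pos _).le hP (by positivity))

theorem exp_neg_mul_le_inv_rpow_div {α β x P : ℝ} (hα : 0 < α) (hβ : 0 ≤ β) (hP₀ : 0 < P)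
    (hP : P ≤ exp (α * x)) : exp (-β * x) ≤ (P ^ (β / α))⁻¹ := by
  rw [neg_mul, exp_neg, ← exp_mul_rpow_div hα.ne' β x]
  exact inv_anti₀ (by positivity) (rpow_le_rpow hP₀.le hP (by positivity))

section Sandwich

variable {g g' : ℝ → ℝ} {a b α₁ α₂ : ℝ}

theorem exp_mul_le_one_add_le_exp_mul_of_sandwich (hab : a ≤ b)
    (hg : ContinuousOn g (Icc a b)) (hg' : ∀ x ∈ Ioo a b, HasDerivAt g (g' x) x) (hga : g a = 0)
    (hα₁ : 0 < α₁) (hprod : α₁ * α₂ = 1) (hg'a : 0 < g' a)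
    (hsandwich : ∀ x ∈ Icc a b,
      α₁ * exp (-α₂ * g x) ≤ g' x / g' a ∧ g' x / g' a ≤ α₂ * exp (-α₁ * g x)) :
    exp (α₁ * g b) ≤ 1 + g' a * (b - a) ∧ 1 + g' a * (b - a) ≤ exp (α₂ * g b) := by
  have hα₂ : 0 < α₂ := pos_of_mul_pos_right (hprod ▸ one_pos) hα₁.le
  have exp_cancel (α y : ℝ) : exp (-α * y) * exp (α * y) = 1 := by
    rw [← exp_add, neg_mul, neg_add_cancel, exp_zero]
  constructor
  · refine exp_mul_le_one_add_of_mul_exp_le hab hg hg' hga fun x hx => ?_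
    have hx' := (div_le_iff₀ hg'a).1 (hsandwich x (Ioo_subset_Icc_self hx)).2
    calc α₁ * g' x * exp (α₁ * g x)
        ≤ α₁ * (α₂ * exp (-α₁ * g x) * g' a) * exp (α₁ * g x) := by gcongr
      _ = α₁ * α₂ * (exp (-α₁ * g x) * exp (α₁ * g x)) * g' a := by ring
      _ = g' a := by rw [hprod, exp_cancel, one_mul, one_mul]
  · refine one_add_le_exp_mul_of_le_mul_exp hab hg hg' hga fun x hx => ?_
    have hx' := (le_div_iff₀ hg'a).1 (hsandwich x (Ioo_subset_Icc_self hx)).1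
    calc g' a = α₂ * α₁ * (exp (-α₂ * g x) * exp (α₂ * g x)) * g' a := by
          rw [mul_comm α₂, hprod, exp_cancel, one_mul, one_mul]
      _ = α₂ * (α₁ * exp (-α₂ * g x) * g' a) * exp (α₂ * g x) := by ring
      _ ≤ α₂ * g' x * exp (α₂ * g x) := by gcongr

theorem power_law_bounds_of_sandwich (hab : a ≤ b)
    (hg : ContinuousOn g (Icc a b)) (hg' : ∀ x ∈ Ioo a b, HasDerivAt g (g' x) x) (hga : g a = 0)
    (hα₁ : 0 < α₁) (hprod : α₁ * α₂ = 1) (hg'a : 0 < g' a)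
    (hsandwich : ∀ x ∈ Icc a b,
      α₁ * exp (-α₂ * g x) ≤ g' x / g' a ∧ g' x / g' a ≤ α₂ * exp (-α₁ * g x)) :
    α₁ * g' a / (1 + g' a * (b - a)) ^ (α₂ / α₁) ≤ g' b ∧
      g' b ≤ α₂ * g' a / (1 + g' a * (b - a)) ^ (α₁ / α₂) := by
  have hα₂ : 0 < α₂ := pos_of_mul_pos_right (hprod ▸ one_pos) hα₁.le
  obtain ⟨hupper, hlower⟩ :=
    exp_mul_le_one_add_le_exp_mul_of_sandwich hab hg hg' hga hα₁ hprod hg'a hsandwich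
  have hP : 0 < 1 + g' a * (b - a) := by nlinarith
  obtain ⟨hb₁, hb₂⟩ := hsandwich b (right_mem_Icc.2 hab)
  constructor
  · calc α₁ * g' a / (1 + g' a * (b - a)) ^ (α₂ / α₁)
        = α₁ * ((1 + g' a * (b - a)) ^ (α₂ / α₁))⁻¹ * g' a := by ring
      _ ≤ α₁ * exp (-α₂ * g b) * g' a := by
          gcongr; exact inv_rpow_div_le_exp_neg_mul hα₁ hα₂.le hupper
      _ ≤ g' b := (le_div_iff₀ hg'a).1 hb₁
  · calc g' b ≤ α₂ * exp (-α₁ * g b) * g' a := (div_le_iff₀ hg'a).1 hb₂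
      _ ≤ α₂ * ((1 + g' a * (b - a)) ^ (α₁ / α₂))⁻¹ * g' a := by
          gcongr; exact exp_neg_mul_le_inv_rpow_div hα₂ hα₁.le hP hlower
      _ = α₂ * g' a / (1 + g' a * (b - a)) ^ (α₁ / α₂) := by ring

end Sandwich

theorem stmt_14_general (h : ℝ → ℝ) (T α₁ α₂ : ℝ)
    (hα₁ : 0 < α₁) (hprod : α₁ * α₂ = 1)
    (hpos : ∀ τ ≥ T, 0 < h τ) (hc : ContinuousOn h (Set.Ici T))
    (hyp : ∀ τa τ, T ≤ τa → τa ≤ τ →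
      α₁ * Real.exp (-4*α₂ * ∫ s in τa..τ, h s) ≤ h τ / h τa ∧
      h τ / h τa ≤ α₂ * Real.exp (-4*α₁ * ∫ s in τa..τ, h s)) :
    ∀ τa τ, T ≤ τa → τa ≤ τ →
      α₁ * h τa / (1 + 4 * h τa * (τ - τa)) ^ (α₂/α₁) ≤ h τ ∧
      h τ ≤ α₂ * h τa / (1 + 4 * h τa * (τ - τa)) ^ (α₁/α₂) := by
  intro τa τ hTa hτ
  have hcont : ContinuousOn h (Icc τa τ) := hc.mono fun x hx => hTa.trans hx.1
  have hprim : ContinuousOn (fun t => ∫ s in τa..t, h s) (Icc τa τ) :=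
    (continuousOn_primitive_interval' (hcont.intervalIntegrable_of_Icc hτ) left_mem_uIcc).mono
      Icc_subset_uIcc
  obtain ⟨hlow, hup⟩ := power_law_bounds_of_sandwich (g := fun t => 4 * ∫ s in τa..t, h s)
    (g' := fun t => 4 * h t) hτ (continuousOn_const.mul hprim)
    (fun x hx => (integral_hasDerivAt_right_of_continuousOn hcont hx).const_mul 4)
    (by simp) hα₁ hprod (by linarith [hpos τa hTa])
    (fun x hx => by
      rw [mul_div_mul_left _ _ four_ne_zero]
      convert hyp τa x hTa hx.1 using 4 <;> ring)
  rw [mul_left_comm, mul_div_assoc] at hlow hup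
  exact ⟨le_of_mul_le_mul_left hlow four_pos, le_of_mul_le_mul_left hup four_pos⟩

/-- Power-law bounds for `h` from the exponential-integral sandwich: if
`α₁ e^{-4α₂∫h} ≤ h(τ)/h(τ_a) ≤ α₂ e^{-4α₁∫h}` with `0 < α₁ < 1 < α₂`,
`α₁α₂ = 1`, then
`α₁ h(τ_a)/(1+4h(τ_a)(τ-τ_a))^{α₂/α₁} ≤ h(τ) ≤ α₂ h(τ_a)/(1+4h(τ_a)(τ-τ_a))^{α₁/α₂}`. -/
theorem stmt_14 (h : ℝ → ℝ) (T α₁ α₂ : ℝ)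
    (hα₁ : 0 < α₁) (hα₁' : α₁ < 1) (hα₂ : 1 < α₂) (hprod : α₁ * α₂ = 1)
    (hpos : ∀ τ ≥ T, 0 < h τ) (hc : ContinuousOn h (Set.Ici T))
    (hyp : ∀ τa τ, T ≤ τa → τa ≤ τ →
      α₁ * Real.exp (-4*α₂ * ∫ s in τa..τ, h s) ≤ h τ / h τa ∧
      h τ / h τa ≤ α₂ * Real.exp (-4*α₁ * ∫ s in τa..τ, h s)) :
    ∀ τa τ, T ≤ τa → τa ≤ τ →
      α₁ * h τa / (1 + 4 * h τa * (τ - τa)) ^ (α₂/α₁) ≤ h τ ∧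
      h τ ≤ α₂ * h τa / (1 + 4 * h τa * (τ - τa)) ^ (α₁/α₂) :=
  stmt_14_general h T α₁ α₂ hα₁ hprod hpos hc hyp
end

section
/- Let ξ : [τ₁,τ₂] → ℝ be C¹ with ξ' = g where g is continuous, g > 0, ξ(τ₂) − ξ(τ₁) = 2π, and suppose there is a constant K ≥ 1 with g(t₁)/g(t₂) ≤ K for all t₁,t₂ ∈ [τ₁,τ₂] and |g(t₁) − g(t₂)| ≤ K for all t₁,t₂ ∈ [τ₁,τ₂]. Then |∫_{τ₁}^{τ₂} sin²(ξ(τ)) dτ − (τ₂−τ₁)/2| ≤ C/g(τ₁)² where C depends only on K. -/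
/-! Since `sin² ξ = 1/2 - cos (2ξ)/2`, the claim is a bound on `∫ cos (2ξ)`. Because `ξ` advances by
a multiple of `π`, `∫ cos (2ξ) · ξ' = 0` exactly; hence `g(τ₁) ∫ cos (2ξ) = ∫ cos (2ξ) (g(τ₁) - g)`,
which is at most `K (τ₂ - τ₁)`. Finally `g ≥ g(τ₁)/K` forces `τ₂ - τ₁ ≤ 2πK/g(τ₁)`. -/

open Real Set MeasureTheory intervalIntegral

theorem integral_sin_sq_comp {ξ : ℝ → ℝ} {a b : ℝ} (hξ : ContinuousOn ξ (uIcc a b)) :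
    ∫ t in a..b, sin (ξ t) ^ 2 = (b - a) / 2 - (∫ t in a..b, cos (2 * ξ t)) / 2 := by
  have hcos : IntervalIntegrable (fun t => cos (2 * ξ t)) volume a b :=
    (continuous_cos.comp_continuousOn (continuousOn_const.mul hξ)).intervalIntegrable
  simp_rw [sin_sq_eq_half_sub]
  rw [integral_sub intervalIntegrable_const (hcos.div_const 2), intervalIntegral.integral_const,
    intervalIntegral.integral_div, smul_eq_mul]
  ring

theorem integral_cos_two_mul_mul_deriv_eq_zero {ξ g : ℝ → ℝ} {a b : ℝ} (n : ℤ)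
    (hξ : ∀ t ∈ uIcc a b, HasDerivAt ξ (g t) t) (hg : IntervalIntegrable g volume a b)
    (hturn : ξ b - ξ a = n * π) :
    ∫ t in a..b, cos (2 * ξ t) * g t = 0 := by
  have hξc : ContinuousOn ξ (uIcc a b) := fun t ht => (hξ t ht).continuousAt.continuousWithinAt
  have hderiv : ∀ t ∈ uIcc a b, HasDerivAt (fun s => sin (2 * ξ s) / 2) (cos (2 * ξ t) * g t) t :=
    fun t ht => (((hξ t ht).const_mul 2).sin.div_const 2).congr_deriv (by ring)
  have hint : IntervalIntegrable (fun t => cos (2 * ξ t) * g t) volume a b :=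
    hg.continuousOn_mul (continuous_cos.comp_continuousOn (continuousOn_const.mul hξc))
  rw [integral_eq_sub_of_hasDerivAt hderiv hint, show ξ b = ξ a + n * π by linarith,
    show 2 * (ξ a + n * π) = 2 * ξ a + n * (2 * π) by ring, sin_add_int_mul_two_pi, sub_self]

theorem abs_mul_abs_integral_cos_two_mul_le {ξ g : ℝ → ℝ} {a b c δ : ℝ} (n : ℤ) (hab : a ≤ b)
    (hξ : ∀ t ∈ Icc a b, HasDerivAt ξ (g t) t) (hg : ContinuousOn g (Icc a b))
    (hturn : ξ b - ξ a = n * π) (hδ : ∀ t ∈ Icc a b, |c - g t| ≤ δ) :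
    |c| * |∫ t in a..b, cos (2 * ξ t)| ≤ δ * (b - a) := by
  rw [← uIcc_of_le hab] at hξ hg
  have hξc : ContinuousOn ξ (uIcc a b) := fun t ht => (hξ t ht).continuousAt.continuousWithinAt
  have hcos : ContinuousOn (fun t => cos (2 * ξ t)) (uIcc a b) :=
    continuous_cos.comp_continuousOn (continuousOn_const.mul hξc)
  have hsplit : c * ∫ t in a..b, cos (2 * ξ t) = ∫ t in a..b, cos (2 * ξ t) * (c - g t) := by
    simp_rw [mul_sub]
    rw [integral_sub (hcos.intervalIntegrable.mul_const c)
      (hcos.intervalIntegrable.mul_continuousOn hg),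
      integral_cos_two_mul_mul_deriv_eq_zero n hξ hg.intervalIntegrable hturn, intervalIntegral.integral_mul_const]
    ring
  have hbound : ∀ t ∈ uIoc a b, ‖cos (2 * ξ t) * (c - g t)‖ ≤ δ := by
    intro t ht
    rw [uIoc_of_le hab] at ht
    rw [Real.norm_eq_abs, abs_mul]
    exact (mul_le_of_le_one_left (abs_nonneg _) (abs_cos_le_one _)).trans
      (hδ t (Ioc_subset_Icc_self ht))
  have := norm_integral_le_of_norm_le_const hbound
  rwa [Real.norm_eq_abs, ← hsplit, abs_mul, abs_of_nonneg (sub_nonneg.2 hab)] at this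

theorem abs_mul_abs_integral_sin_sq_sub_half_le {ξ g : ℝ → ℝ} {a b c δ : ℝ} (n : ℤ) (hab : a ≤ b)
    (hξ : ∀ t ∈ Icc a b, HasDerivAt ξ (g t) t) (hg : ContinuousOn g (Icc a b))
    (hturn : ξ b - ξ a = n * π) (hδ : ∀ t ∈ Icc a b, |c - g t| ≤ δ) :
    |c| * |(∫ t in a..b, sin (ξ t) ^ 2) - (b - a) / 2| ≤ δ * (b - a) / 2 := by
  have hξc : ContinuousOn ξ (uIcc a b) := fun t ht =>
    (hξ t (uIcc_of_le hab ▸ ht)).continuousAt.continuousWithinAt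
  have hcos := abs_mul_abs_integral_cos_two_mul_le n hab hξ hg hturn hδ
  rw [integral_sin_sq_comp hξc, show ∀ x y : ℝ, x - y / 2 - x = -(y / 2) by intros; ring, abs_neg,
    abs_div, abs_two]
  linarith

theorem mul_sub_le_sub_of_le_hasDerivAt_s15 {ξ g : ℝ → ℝ} {a b m : ℝ} (hab : a ≤ b)
    (hξ : ∀ t ∈ Icc a b, HasDerivAt ξ (g t) t) (hm : ∀ t ∈ Icc a b, m ≤ g t) :
    m * (b - a) ≤ ξ b - ξ a := by
  refine (convex_Icc a b).mul_sub_le_image_sub_of_le_deriv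
    (fun t ht => (hξ t ht).continuousAt.continuousWithinAt)
    (fun t ht => (hξ t (interior_subset ht)).differentiableAt.differentiableWithinAt)
    (fun t ht => ?_) a (left_mem_Icc.2 hab) b (right_mem_Icc.2 hab) hab
  rw [(hξ t (interior_subset ht)).deriv]
  exact hm t (interior_subset ht)

/-- Averaging lemma for fast oscillations: if `ξ' = g > 0` advances by `2π`
over `[τ₁,τ₂]` and `g` has ratio and difference variation bounded by `K`,
then `∫ sin²(ξ) = (τ₂-τ₁)/2 + O(1/g(τ₁)²)` with constant depending only on `K`. -/
theorem stmt_15 (K : ℝ) (hK : 1 ≤ K) :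
    ∃ C : ℝ, ∀ (τ₁ τ₂ : ℝ) (g ξ : ℝ → ℝ), τ₁ ≤ τ₂ →
      ContinuousOn g (Set.Icc τ₁ τ₂) →
      (∀ t ∈ Set.Icc τ₁ τ₂, 0 < g t) →
      (∀ t ∈ Set.Icc τ₁ τ₂, HasDerivAt ξ (g t) t) →
      ξ τ₂ - ξ τ₁ = 2 * Real.pi →
      (∀ t₁ ∈ Set.Icc τ₁ τ₂, ∀ t₂ ∈ Set.Icc τ₁ τ₂,
        g t₁ / g t₂ ≤ K ∧ |g t₁ - g t₂| ≤ K) →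
      |(∫ τ in τ₁..τ₂, Real.sin (ξ τ) ^ 2) - (τ₂ - τ₁)/2| ≤ C / (g τ₁)^2 := by
  refine ⟨π * K ^ 2, fun τ₁ τ₂ g ξ hle hgc hgpos hξ hturn hvar => ?_⟩
  have hK0 : 0 < K := one_pos.trans_le hK
  have hτ₁ : τ₁ ∈ Icc τ₁ τ₂ := left_mem_Icc.2 hle
  have hg₁ : 0 < g τ₁ := hgpos τ₁ hτ₁
  have herr : g τ₁ * |(∫ τ in τ₁..τ₂, sin (ξ τ) ^ 2) - (τ₂ - τ₁) / 2| ≤ K * (τ₂ - τ₁) / 2 := by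
    have := abs_mul_abs_integral_sin_sq_sub_half_le 2 hle hξ hgc (by rw [hturn]; norm_num)
      fun t ht => (hvar τ₁ hτ₁ t ht).2
    rwa [abs_of_pos hg₁] at this
  have hlower : ∀ t ∈ Icc τ₁ τ₂, g τ₁ / K ≤ g t := fun t ht =>
    (div_le_iff₀ hK0).2 <| by
      simpa [mul_comm] using (div_le_iff₀ (hgpos t ht)).1 (hvar τ₁ hτ₁ t ht).1
  have hlen : g τ₁ * (τ₂ - τ₁) ≤ 2 * π * K := by
    have := hturn ▸ mul_sub_le_sub_of_le_hasDerivAt_s15 hle hξ hlower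
    rwa [div_mul_eq_mul_div, div_le_iff₀ hK0] at this
  rw [le_div_iff₀ (by positivity)]
  calc |(∫ τ in τ₁..τ₂, sin (ξ τ) ^ 2) - (τ₂ - τ₁) / 2| * g τ₁ ^ 2
      = g τ₁ * (g τ₁ * |(∫ τ in τ₁..τ₂, sin (ξ τ) ^ 2) - (τ₂ - τ₁) / 2|) := by ring
    _ ≤ g τ₁ * (K * (τ₂ - τ₁) / 2) := by gcongr
    _ = K * (g τ₁ * (τ₂ - τ₁)) / 2 := by ring
    _ ≤ K * (2 * π * K) / 2 := by gcongr
    _ = π * K ^ 2 := by ring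
end
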